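/- Let ε1, ε2 ∈ {−1,1} and let δ1, δ2 be arbitrary real constants (integrable or non-integrable case). Let a, b, c, d be real numbers with ad − bc = 1, and let (ψ̃, w̃) be a smooth solution of the DS system on ℝ³. Define, for all (t,x,y) with ct + d ≠ 0, ψ(t,x,y) = (ct+d)^{−1} exp[i c(x² + ε1 y²)/(4(ct+d))] ψ̃((at+b)/(ct+d), x/(ct+d), y/(ct+d)) and w(t,x,y) = (ct+d)^{−2} w̃((at+b)/(ct+d), x/(ct+d), y/(ct+d)). Then (ψ, w) satisfies the same DS system at every point (t,x,y) with ct + d ≠ 0. -/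

import Mathlib

noncomputable section

/-- Partial derivative in the first (time) variable. -/
def dt3 (f : ℝ → ℝ → ℝ → ℂ) : ℝ → ℝ → ℝ → ℂ := fun t x y => deriv (fun s => f s x y) t

/-- Partial derivative in the second (x) variable. -/
def dx3 (f : ℝ → ℝ → ℝ → ℂ) : ℝ → ℝ → ℝ → ℂ := fun t x y => deriv (fun s => f t s y) x

/-- Partial derivative in the third (y) variable. -/
def dy3 (f : ℝ → ℝ → ℝ → ℂ) : ℝ → ℝ → ℝ → ℂ := fun t x y => deriv (fun s => f t x s) y

/-- Partial derivative in the second (x) variable, real-valued functions. -/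
def rx3 (f : ℝ → ℝ → ℝ → ℝ) : ℝ → ℝ → ℝ → ℝ := fun t x y => deriv (fun s => f t s y) x

/-- Partial derivative in the third (y) variable, real-valued functions. -/
def ry3 (f : ℝ → ℝ → ℝ → ℝ) : ℝ → ℝ → ℝ → ℝ := fun t x y => deriv (fun s => f t x s) y

/-- Smoothness of a complex-valued function of (t,x,y). -/
def Smooth3C (f : ℝ → ℝ → ℝ → ℂ) : Prop :=
  ContDiff ℝ (⊤ : ℕ∞) (fun p : ℝ × ℝ × ℝ => f p.1 p.2.1 p.2.2)

/-- Smoothness of a real-valued function of (t,x,y). -/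
def Smooth3R (f : ℝ → ℝ → ℝ → ℝ) : Prop :=
  ContDiff ℝ (⊤ : ℕ∞) (fun p : ℝ × ℝ × ℝ => f p.1 p.2.1 p.2.2)

/-- The Davey–Stewartson system with constants ε₁, ε₂, δ₁, δ₂ holds at the point (t,x,y):
`i ψ_t + ψ_xx + ε₁ ψ_yy = ε₂ |ψ|² ψ + ψ w`, `w_xx + δ₁ w_yy = δ₂ (|ψ|²)_yy`. -/
def DSAt (ε1 ε2 δ1 δ2 : ℝ) (ψ : ℝ → ℝ → ℝ → ℂ) (w : ℝ → ℝ → ℝ → ℝ)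
    (t x y : ℝ) : Prop :=
  Complex.I * dt3 ψ t x y + dx3 (dx3 ψ) t x y + (ε1 : ℂ) * dy3 (dy3 ψ) t x y
      = (ε2 : ℂ) * (‖ψ t x y‖)^2 * ψ t x y + ψ t x y * (w t x y : ℂ)
    ∧ rx3 (rx3 w) t x y + δ1 * ry3 (ry3 w) t x y
      = δ2 * ry3 (ry3 (fun t x y => (‖ψ t x y‖)^2)) t x y

/-- (ψ, w) is a solution of the Davey–Stewartson system everywhere. -/
def IsDSSolution (ε1 ε2 δ1 δ2 : ℝ) (ψ : ℝ → ℝ → ℝ → ℂ) (w : ℝ → ℝ → ℝ → ℝ) : Prop :=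
  ∀ t x y : ℝ, DSAt ε1 ε2 δ1 δ2 ψ w t x y

/-! The transformation composes the Möbius change of time `t ↦ (at+b)/(ct+d)`, the dilation
`(x,y) ↦ (x,y)/(ct+d)` and multiplication by the chirp `exp (i c (x² + ε₁y²) / (4(ct+d)))`.
By the chain rule `ψ_t`, `ψ_xx`, `ψ_yy` are combinations of the transforms of `ψ̃` and of its
partial derivatives. In `i ψ_t + ψ_xx + ε₁ ψ_yy` the terms carrying `ψ̃`, `ψ̃_x`, `ψ̃_y` cancel
(the time derivative of the Möbius map is `(ad - bc)/(ct+d)² = (ct+d)⁻²` and `ε₁² = 1`), leaving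
`(ct+d)⁻²` times the transform of `i ψ̃_t + ψ̃_xx + ε₁ ψ̃_yy`, which matches the transform of the
nonlinearity. The second equation involves only `x,y`-derivatives of dilated functions, and
`|ψ|²` transforms exactly like `w`, so both of its sides pick up the factor `(ct+d)⁻⁴`. -/

section Calculus3

variable {E : Type*} [NormedAddCommGroup E] [NormedSpace ℝ E]

theorem hasDerivAt_comp_curve₃ {F : ℝ × ℝ × ℝ → E} (hF : Differentiable ℝ F)
    {T X Y : ℝ → ℝ} {T' X' Y' s : ℝ}
    (hT : HasDerivAt T T' s) (hX : HasDerivAt X X' s) (hY : HasDerivAt Y Y' s) :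
    HasDerivAt (fun r => F (T r, X r, Y r))
      (T' • fderiv ℝ F (T s, X s, Y s) (1, 0, 0) + X' • fderiv ℝ F (T s, X s, Y s) (0, 1, 0)
        + Y' • fderiv ℝ F (T s, X s, Y s) (0, 0, 1)) s := by
  have h := (hF _).hasFDerivAt.comp_hasDerivAt s (hT.prodMk (hX.prodMk hY))
  rw [show ((T', X', Y') : ℝ × ℝ × ℝ) = T' • (1, 0, 0) + X' • (0, 1, 0) + Y' • (0, 0, 1) by
    simp] at h
  simp only [map_add, map_smul] at h
  exact h

variable {F : ℝ × ℝ × ℝ → E} (hF : Differentiable ℝ F) (t x y : ℝ)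
include hF

theorem deriv_slice_fst₃ : deriv (fun s => F (s, x, y)) t = fderiv ℝ F (t, x, y) (1, 0, 0) := by
  simpa using (hasDerivAt_comp_curve₃ hF (hasDerivAt_id t) (hasDerivAt_const t x)
    (hasDerivAt_const t y)).deriv

theorem deriv_slice_snd₃ : deriv (fun s => F (t, s, y)) x = fderiv ℝ F (t, x, y) (0, 1, 0) := by
  simpa using (hasDerivAt_comp_curve₃ hF (hasDerivAt_const x t) (hasDerivAt_id x)
    (hasDerivAt_const x y)).deriv

theorem deriv_slice_thd₃ : deriv (fun s => F (t, x, s)) y = fderiv ℝ F (t, x, y) (0, 0, 1) := by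
  simpa using (hasDerivAt_comp_curve₃ hF (hasDerivAt_const y t) (hasDerivAt_const y x)
    (hasDerivAt_id y)).deriv

end Calculus3

namespace Smooth3C

variable {f : ℝ → ℝ → ℝ → ℂ} (hf : Smooth3C f)
include hf

theorem differentiable : Differentiable ℝ (fun p : ℝ × ℝ × ℝ => f p.1 p.2.1 p.2.2) :=
  ContDiff.differentiable hf (by simp)

theorem hasDerivAt_comp {T X Y : ℝ → ℝ} {T' X' Y' s : ℝ}
    (hT : HasDerivAt T T' s) (hX : HasDerivAt X X' s) (hY : HasDerivAt Y Y' s) :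
    HasDerivAt (fun r => f (T r) (X r) (Y r))
      (T' * dt3 f (T s) (X s) (Y s) + X' * dx3 f (T s) (X s) (Y s)
        + Y' * dy3 f (T s) (X s) (Y s)) s := by
  have h := hasDerivAt_comp_curve₃ hf.differentiable hT hX hY
  simp only [dt3, dx3, dy3]
  rw [deriv_slice_fst₃ hf.differentiable, deriv_slice_snd₃ hf.differentiable,
    deriv_slice_thd₃ hf.differentiable]
  simpa only [Complex.real_smul] using h

theorem hasDerivAt_comp_div_snd (t y l r : ℝ) :
    HasDerivAt (fun s => f t (s / l) y) ((l : ℂ)⁻¹ * dx3 f t (r / l) y) r :=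
  (hf.hasDerivAt_comp (hasDerivAt_const r t) ((hasDerivAt_id r).div_const l)
    (hasDerivAt_const r y)).congr_deriv (by simp)

theorem hasDerivAt_comp_div_thd (t x l r : ℝ) :
    HasDerivAt (fun s => f t x (s / l)) ((l : ℂ)⁻¹ * dy3 f t x (r / l)) r :=
  (hf.hasDerivAt_comp (hasDerivAt_const r t) (hasDerivAt_const r x)
    ((hasDerivAt_id r).div_const l)).congr_deriv (by simp)

theorem dx3 : Smooth3C (dx3 f) := by
  have h : ContDiff ℝ (⊤ : ℕ∞)
      fun p => fderiv ℝ (fun p : ℝ × ℝ × ℝ => f p.1 p.2.1 p.2.2) p (0, 1, 0) :=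
    (ContinuousLinearMap.apply ℝ ℂ _).contDiff.comp (hf.fderiv_right (by simp))
  have e : _root_.dx3 f
      = fun t x y => fderiv ℝ (fun p : ℝ × ℝ × ℝ => f p.1 p.2.1 p.2.2) (t, x, y) (0, 1, 0) := by
    funext t x y
    exact deriv_slice_snd₃ hf.differentiable t x y
  rw [Smooth3C, e]
  exact h

theorem dy3 : Smooth3C (dy3 f) := by
  have h : ContDiff ℝ (⊤ : ℕ∞)
      fun p => fderiv ℝ (fun p : ℝ × ℝ × ℝ => f p.1 p.2.1 p.2.2) p (0, 0, 1) :=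
    (ContinuousLinearMap.apply ℝ ℂ _).contDiff.comp (hf.fderiv_right (by simp))
  have e : _root_.dy3 f
      = fun t x y => fderiv ℝ (fun p : ℝ × ℝ × ℝ => f p.1 p.2.1 p.2.2) (t, x, y) (0, 0, 1) := by
    funext t x y
    exact deriv_slice_thd₃ hf.differentiable t x y
  rw [Smooth3C, e]
  exact h

end Smooth3C

theorem deriv_deriv_const_mul_comp_div {𝕜 : Type*} [NontriviallyNormedField 𝕜]
    (C l : 𝕜) (g : 𝕜 → 𝕜) (x : 𝕜) :
    deriv (deriv fun r => C * g (r / l)) x = C * l⁻¹ ^ 2 * deriv (deriv g) (x / l) := by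
  have hscale : ∀ f : 𝕜 → 𝕜, deriv (fun r => f (r / l)) = fun r => l⁻¹ * deriv f (r / l) := by
    intro f
    funext r
    simpa only [div_eq_inv_mul, smul_eq_mul] using deriv_comp_mul_left l⁻¹ f r
  simp only [deriv_const_mul_field', hscale]
  ring

theorem hasDerivAt_div_affine (x c d t : ℝ) (hl : c * t + d ≠ 0) :
    HasDerivAt (fun s => x / (c * s + d)) (-(c * x) / (c * t + d) ^ 2) t := by
  have hden : HasDerivAt (fun s => c * s + d) c t := by
    simpa using ((hasDerivAt_id t).const_mul c).add_const d
  exact ((hasDerivAt_const t x).div hden hl).congr_deriv (by ring)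

theorem hasDerivAt_moebius {a b c d t : ℝ} (habcd : a * d - b * c = 1) (hl : c * t + d ≠ 0) :
    HasDerivAt (fun s => (a * s + b) / (c * s + d)) (1 / (c * t + d) ^ 2) t := by
  have hnum : HasDerivAt (fun s => a * s + b) a t := by
    simpa using ((hasDerivAt_id t).const_mul a).add_const b
  have hden : HasDerivAt (fun s => c * s + d) c t := by
    simpa using ((hasDerivAt_id t).const_mul c).add_const d
  refine (hnum.div hden hl).congr_deriv ?_
  congr 1
  linear_combination habcd

open Complex

theorem deriv_deriv_mul_exp_mul {A : ℂ} {φ φ' : ℝ → ℝ} {φ'' : ℝ} {F F' : ℝ → ℂ} {F'' : ℂ}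
    {x : ℝ} (hφ : ∀ r, HasDerivAt φ (φ' r) r) (hφ' : HasDerivAt φ' φ'' x)
    (hF : ∀ r, HasDerivAt F (F' r) r) (hF' : HasDerivAt F' F'' x) :
    deriv (deriv fun r => A * exp (I * φ r) * F r) x
      = A * exp (I * φ x) * ((I * φ'' - φ' x ^ 2) * F x + 2 * I * φ' x * F' x + F'') := by
  have hE : ∀ r, HasDerivAt (fun r => exp (I * φ r)) (exp (I * φ r) * (I * φ' r)) r :=
    fun r => ((hφ r).ofReal_comp.const_mul I).cexp
  have hfirst : deriv (fun r => A * exp (I * φ r) * F r)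
      = fun r => A * exp (I * φ r) * (I * φ' r * F r + F' r) := by
    funext r
    exact (((hE r).const_mul A).mul (hF r)).deriv.trans (by ring)
  rw [hfirst]
  refine (((hE x).const_mul A).mul
    (((hφ'.ofReal_comp.const_mul I).mul (hF x)).add hF')).deriv.trans ?_
  simp only [Pi.mul_apply, Pi.add_apply]
  linear_combination A * exp (I * φ x) * φ' x ^ 2 * F x * I_sq

def sl2Wave (ε1 a b c d : ℝ) (ψ : ℝ → ℝ → ℝ → ℂ) : ℝ → ℝ → ℝ → ℂ :=
  fun t x y => ((c * t + d : ℝ) : ℂ)⁻¹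
    * exp (I * ((c * (x ^ 2 + ε1 * y ^ 2) / (4 * (c * t + d)) : ℝ) : ℂ))
    * ψ ((a * t + b) / (c * t + d)) (x / (c * t + d)) (y / (c * t + d))

def sl2Flow (a b c d : ℝ) (w : ℝ → ℝ → ℝ → ℝ) : ℝ → ℝ → ℝ → ℝ :=
  fun t x y => (c * t + d)⁻¹ ^ 2
    * w ((a * t + b) / (c * t + d)) (x / (c * t + d)) (y / (c * t + d))

section Transformation

variable {ε1 ε2 δ1 δ2 a b c d : ℝ}

theorem norm_sl2Wave_sq (ψ : ℝ → ℝ → ℝ → ℂ) :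
    (fun t x y => ‖sl2Wave ε1 a b c d ψ t x y‖ ^ 2)
      = sl2Flow a b c d (fun t x y => ‖ψ t x y‖ ^ 2) := by
  funext t x y
  simp only [sl2Wave, sl2Flow, norm_mul, norm_inv, norm_real, norm_exp_I_mul_ofReal,
    Real.norm_eq_abs, mul_one, mul_pow, inv_pow, sq_abs]

theorem rx3_rx3_sl2Flow (w : ℝ → ℝ → ℝ → ℝ) (t x y : ℝ) :
    rx3 (rx3 (sl2Flow a b c d w)) t x y
      = (c * t + d)⁻¹ ^ 4
        * rx3 (rx3 w) ((a * t + b) / (c * t + d)) (x / (c * t + d)) (y / (c * t + d)) :=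
  (deriv_deriv_const_mul_comp_div _ (c * t + d)
    (fun u => w ((a * t + b) / (c * t + d)) u (y / (c * t + d))) x).trans
    (congrArg (· * _) (by ring))

theorem ry3_ry3_sl2Flow (w : ℝ → ℝ → ℝ → ℝ) (t x y : ℝ) :
    ry3 (ry3 (sl2Flow a b c d w)) t x y
      = (c * t + d)⁻¹ ^ 4
        * ry3 (ry3 w) ((a * t + b) / (c * t + d)) (x / (c * t + d)) (y / (c * t + d)) :=
  (deriv_deriv_const_mul_comp_div _ (c * t + d)
    (fun u => w ((a * t + b) / (c * t + d)) (x / (c * t + d)) u) y).trans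
    (congrArg (· * _) (by ring))

variable {ψ : ℝ → ℝ → ℝ → ℂ} (hψ : Smooth3C ψ)
include hψ

theorem dx3_dx3_sl2Wave (t x y : ℝ) :
    dx3 (dx3 (sl2Wave ε1 a b c d ψ)) t x y
      = (I * c / (2 * ((c * t + d : ℝ) : ℂ)) - c ^ 2 * x ^ 2 / (4 * ((c * t + d : ℝ) : ℂ) ^ 2))
          * sl2Wave ε1 a b c d ψ t x y
        + I * c * x / ((c * t + d : ℝ) : ℂ) ^ 2 * sl2Wave ε1 a b c d (dx3 ψ) t x y
        + sl2Wave ε1 a b c d (dx3 (dx3 ψ)) t x y / ((c * t + d : ℝ) : ℂ) ^ 2 := by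
  refine (deriv_deriv_mul_exp_mul (A := ((c * t + d : ℝ) : ℂ)⁻¹)
    (φ := fun r => c * (r ^ 2 + ε1 * y ^ 2) / (4 * (c * t + d)))
    (φ' := fun r => c * (2 * r) / (4 * (c * t + d))) (φ'' := c * 2 / (4 * (c * t + d)))
    (fun r => ((((hasDerivAt_pow 2 r).add_const _).const_mul c).div_const _).congr_deriv
      (by simp))
    (((((hasDerivAt_id x).const_mul 2).const_mul c).div_const _).congr_deriv (by ring))
    (hψ.hasDerivAt_comp_div_snd _ _ _)
    (((hψ.dx3.hasDerivAt_comp_div_snd _ _ _ x).const_mul _))).trans ?_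
  simp only [sl2Wave]
  -- `ring` cannot relate `(4 * (c * t + d))⁻¹` to `(c * t + d)⁻¹`, but it does for an atom `l`
  generalize c * t + d = l
  push_cast
  ring

theorem dy3_dy3_sl2Wave (t x y : ℝ) :
    dy3 (dy3 (sl2Wave ε1 a b c d ψ)) t x y
      = (I * c * ε1 / (2 * ((c * t + d : ℝ) : ℂ))
            - c ^ 2 * ε1 ^ 2 * y ^ 2 / (4 * ((c * t + d : ℝ) : ℂ) ^ 2))
          * sl2Wave ε1 a b c d ψ t x y
        + I * c * ε1 * y / ((c * t + d : ℝ) : ℂ) ^ 2 * sl2Wave ε1 a b c d (dy3 ψ) t x y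
        + sl2Wave ε1 a b c d (dy3 (dy3 ψ)) t x y / ((c * t + d : ℝ) : ℂ) ^ 2 := by
  refine (deriv_deriv_mul_exp_mul (A := ((c * t + d : ℝ) : ℂ)⁻¹)
    (φ := fun r => c * (x ^ 2 + ε1 * r ^ 2) / (4 * (c * t + d)))
    (φ' := fun r => c * (ε1 * (2 * r)) / (4 * (c * t + d)))
    (φ'' := c * (ε1 * 2) / (4 * (c * t + d)))
    (fun r => ((((hasDerivAt_pow 2 r).const_mul ε1).const_add _).const_mul c |>.div_const _
      |>.congr_deriv (by simp)))
    ((((((hasDerivAt_id y).const_mul 2).const_mul ε1).const_mul c).div_const _).congr_deriv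
      (by ring))
    (hψ.hasDerivAt_comp_div_thd _ _ _)
    (((hψ.dy3.hasDerivAt_comp_div_thd _ _ _ y).const_mul _))).trans ?_
  simp only [sl2Wave]
  generalize c * t + d = l
  push_cast
  ring

theorem dt3_sl2Wave (habcd : a * d - b * c = 1) {t : ℝ} (hl : c * t + d ≠ 0) (x y : ℝ) :
    dt3 (sl2Wave ε1 a b c d ψ) t x y
      = -(c / ((c * t + d : ℝ) : ℂ)
            + I * c ^ 2 * (x ^ 2 + ε1 * y ^ 2) / (4 * ((c * t + d : ℝ) : ℂ) ^ 2))
          * sl2Wave ε1 a b c d ψ t x y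
        + (sl2Wave ε1 a b c d (dt3 ψ) t x y - c * x * sl2Wave ε1 a b c d (dx3 ψ) t x y
          - c * y * sl2Wave ε1 a b c d (dy3 ψ) t x y) / ((c * t + d : ℝ) : ℂ) ^ 2 := by
  have hinv := (hasDerivAt_div_affine 1 c d t hl).ofReal_comp
  simp only [one_div, ofReal_inv] at hinv
  have hphase := hasDerivAt_div_affine (c * (x ^ 2 + ε1 * y ^ 2) / 4) c d t hl
  simp only [div_div] at hphase
  have hψt := hψ.hasDerivAt_comp (hasDerivAt_moebius habcd hl)
    (hasDerivAt_div_affine x c d t hl) (hasDerivAt_div_affine y c d t hl)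
  refine ((hinv.mul (hphase.ofReal_comp.const_mul I).cexp).mul hψt).deriv.trans ?_
  simp only [sl2Wave, Pi.mul_apply]
  generalize c * t + d = l
  push_cast
  ring

theorem dsAt_sl2 {w : ℝ → ℝ → ℝ → ℝ} (hε1 : ε1 ^ 2 = 1) (habcd : a * d - b * c = 1)
    {t x y : ℝ} (hl : c * t + d ≠ 0)
    (hsol : DSAt ε1 ε2 δ1 δ2 ψ w
      ((a * t + b) / (c * t + d)) (x / (c * t + d)) (y / (c * t + d))) :
    DSAt ε1 ε2 δ1 δ2 (sl2Wave ε1 a b c d ψ) (sl2Flow a b c d w) t x y := by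
  obtain ⟨hwave, hflow⟩ := hsol
  constructor
  · have hε1C : (ε1 : ℂ) ^ 2 = 1 := by exact_mod_cast hε1
    have hnorm : ((‖sl2Wave ε1 a b c d ψ t x y‖ : ℝ) : ℂ) ^ 2
        = ((sl2Flow a b c d (fun t x y => ‖ψ t x y‖ ^ 2) t x y : ℝ) : ℂ) := by
      exact_mod_cast congrFun₃ (norm_sl2Wave_sq ψ) t x y
    rw [dt3_sl2Wave hψ habcd hl, dx3_dx3_sl2Wave hψ, dy3_dy3_sl2Wave hψ, hnorm]
    set L : ℂ := ((c * t + d : ℝ) : ℂ)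
    set E := exp (I * ((c * (x ^ 2 + ε1 * y ^ 2) / (4 * (c * t + d)) : ℝ) : ℂ))
    have hΨ : ∀ f : ℝ → ℝ → ℝ → ℂ, sl2Wave ε1 a b c d f t x y
        = L⁻¹ * E * f ((a * t + b) / (c * t + d)) (x / (c * t + d)) (y / (c * t + d)) :=
      fun _ => rfl
    simp only [sl2Flow, ofReal_mul, ofReal_pow, ofReal_inv]
    linear_combination (norm := (simp only [hΨ]; ring)) L⁻¹ ^ 3 * E * hwave
      + ((I * c / (2 * L) - c ^ 2 * ε1 * y ^ 2 / (4 * L ^ 2)) * sl2Wave ε1 a b c d ψ t x y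
        + I * c * y / L ^ 2 * sl2Wave ε1 a b c d (dy3 ψ) t x y) * hε1C
      - c ^ 2 * (x ^ 2 + ε1 * y ^ 2) / (4 * L ^ 2) * sl2Wave ε1 a b c d ψ t x y * I_sq
  · rw [rx3_rx3_sl2Flow, ry3_ry3_sl2Flow, norm_sl2Wave_sq, ry3_ry3_sl2Flow]
    linear_combination (c * t + d)⁻¹ ^ 4 * hflow

end Transformation

theorem ds_sl2_invariance
    (ε1 ε2 δ1 δ2 : ℝ) (hε1 : ε1 = 1 ∨ ε1 = -1)
    (a b c d : ℝ) (habcd : a * d - b * c = 1)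
    (ψt : ℝ → ℝ → ℝ → ℂ) (wt : ℝ → ℝ → ℝ → ℝ)
    (hψt : Smooth3C ψt)
    (hsol : IsDSSolution ε1 ε2 δ1 δ2 ψt wt) :
    ∀ t x y : ℝ, c * t + d ≠ 0 →
      DSAt ε1 ε2 δ1 δ2
        (fun t x y => ((c * t + d : ℝ) : ℂ)⁻¹
          * Complex.exp (Complex.I * ((c * (x^2 + ε1 * y^2) / (4 * (c * t + d)) : ℝ) : ℂ))
          * ψt ((a * t + b) / (c * t + d)) (x / (c * t + d)) (y / (c * t + d)))
        (fun t x y => (c * t + d)⁻¹^2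
          * wt ((a * t + b) / (c * t + d)) (x / (c * t + d)) (y / (c * t + d)))
        t x y := by
  have hε1 : ε1 ^ 2 = 1 := by rcases hε1 with rfl | rfl <;> norm_num
  exact fun t x y hl => dsAt_sl2 hψt hε1 habcd hl (hsol _ _ _)
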